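/- Let G be a second countable locally compact Hausdorff principal groupoid with left Haar system. If G is integrable then all orbits of G are closed in G⁰. -/

import Mathlib

open MeasureTheory Filter Topology ENNReal Classical

/-- A topological groupoid, given by range/source maps, a (total) partial-multiplication
`mul` (only meaningful on composable pairs, i.e. when `s γ = r α`) and inversion. -/
structure TopGroupoid (G : Type*) [TopologicalSpace G] where
  r : G → G
  s : G → G
  mul : G → G → G
  inv : G → G
  r_mul : ∀ γ α, s γ = r α → r (mul γ α) = r γ
  s_mul : ∀ γ α, s γ = r α → s (mul γ α) = s α
  mul_assoc' : ∀ γ α β, s γ = r α → s α = r β → mul (mul γ α) β = mul γ (mul α β)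
  r_inv : ∀ γ, r (inv γ) = s γ
  s_inv : ∀ γ, s (inv γ) = r γ
  inv_inv' : ∀ γ, inv (inv γ) = γ
  mul_inv' : ∀ γ, mul γ (inv γ) = r γ
  inv_mul' : ∀ γ, mul (inv γ) γ = s γ
  unit_mul : ∀ γ, mul (r γ) γ = γ
  mul_unit : ∀ γ, mul γ (s γ) = γ
  continuous_r : Continuous r
  continuous_s : Continuous s
  continuous_inv : Continuous inv
  continuous_mul : ContinuousOn (fun p : G × G => mul p.1 p.2) {p | s p.1 = r p.2}

namespace TopGroupoid

variable {G : Type*} [TopologicalSpace G] (Gd : TopGroupoid G)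

/-- The unit space `G⁰` of the groupoid. -/
def units : Set G := Set.range Gd.r

/-- The orbit `[z] = r(s⁻¹{z})` of a unit `z`. -/
def orbit (z : G) : Set G := Gd.r '' (Gd.s ⁻¹' {z})

/-- A groupoid is principal if `γ ↦ (r γ, s γ)` is injective. -/
def Principal : Prop := Function.Injective (fun γ => (Gd.r γ, Gd.s γ))

/-- Product of two subsets of the groupoid: all products of composable pairs. -/
def setMul (A B : Set G) : Set G :=
  {x | ∃ γ ∈ A, ∃ α ∈ B, Gd.s γ = Gd.r α ∧ x = Gd.mul γ α}

/-- Powers of a subset with respect to `setMul`; `A ^ 1 = A`. -/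
def setPow (A : Set G) : ℕ → Set G
  | 0 => Gd.units
  | n+1 => Gd.setMul A (setPow A n)

/-- A set `W ⊆ G` is conditionally compact if `WV` and `VW` are relatively compact
for every compact `V ⊆ G`. -/
def CondCompact (W : Set G) : Prop :=
  ∀ V : Set G, IsCompact V →
    IsCompact (closure (Gd.setMul W V)) ∧ IsCompact (closure (Gd.setMul V W))

/-- A sequence `x : ℕ → G` (in the unit space) converges `k`-times in `G⁰/G` to `z`. -/
def ConvergesKTimes (x : ℕ → G) (z : G) (k : ℕ) : Prop :=
  ∃ γ : Fin k → ℕ → G,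
    (∀ i n, Gd.s (γ i n) = x n) ∧
    (∀ i, Tendsto (fun n => Gd.r (γ i n)) atTop (𝓝 z)) ∧
    (∀ i j : Fin k, i < j →
      Tendsto (fun n => Gd.mul (γ j n) (Gd.inv (γ i n))) atTop (cocompact G))

end TopGroupoid

/-- A left Haar system on a topological groupoid: a family of Radon measures `λˣ`
with support `r⁻¹{x}`, continuous in `x`, and left invariant. -/
structure HaarSystem {G : Type*} [TopologicalSpace G] [MeasurableSpace G]
    (Gd : TopGroupoid G) where
  lam : G → Measure G
  regular : ∀ x, (lam x).Regular
  supp_subset : ∀ x ∈ Gd.units, lam x {γ | Gd.r γ ≠ x} = 0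
  supp_full : ∀ x ∈ Gd.units, ∀ U : Set G, IsOpen U →
      (U ∩ Gd.r ⁻¹' {x}).Nonempty → 0 < lam x U
  continuous_int : ∀ f : G → ℝ, Continuous f → HasCompactSupport f →
      Continuous fun x => ∫ γ, f γ ∂(lam x)
  left_invariant : ∀ γ : G, ∀ f : G → ℝ, Continuous f → HasCompactSupport f →
      ∫ α, f (Gd.mul γ α) ∂(lam (Gd.s γ)) = ∫ α, f α ∂(lam (Gd.r γ))

namespace HaarSystem

variable {G : Type*} [TopologicalSpace G] [MeasurableSpace G]
  {Gd : TopGroupoid G} (HS : HaarSystem Gd)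

/-- The associated right Haar system `λ_x(E) = λˣ(E⁻¹)`, supported on `s⁻¹{x}`. -/
noncomputable def rlam (x : G) : Measure G := (HS.lam x).map Gd.inv

/-- The groupoid (with its Haar system) is integrable if
`sup_{x ∈ N} λˣ(s⁻¹ N) < ∞` for every compact `N ⊆ G⁰`. -/
def Integrable : Prop :=
  ∀ N : Set G, N ⊆ Gd.units → IsCompact N →
    (⨆ x ∈ N, HS.lam x (Gd.s ⁻¹' N)) < ⊤

/-- `G` fails to be integrable at `z` if `sup_{x ∈ U} λˣ(s⁻¹ U) = ∞` for every open
neighborhood `U` of `z` in `G⁰`. -/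
def FailsIntegrableAt (z : G) : Prop :=
  ∀ U : Set G, IsOpen U → z ∈ U →
    (⨆ x ∈ U ∩ Gd.units, HS.lam x (Gd.s ⁻¹' (U ∩ Gd.units))) = ⊤

end HaarSystem

/-!
Suppose a unit `y` lies in the closure of the orbit of `z` but not in the orbit itself, and pick
a bump function `f` at `y` with support `K`; its `λ`-integral `F` is continuous and positive at
`y`. Arrows `γₙ` from `z` with `r γₙ` near `y` can be chosen so that `γₙ γₘ⁻¹ ∉ K K⁻¹` for `m < n`:
the arrows of the compact set `K K⁻¹` that end at `r γₘ` have ranges forming a compact set,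
which misses `y` because `y ∉ [z]`. By left invariance each set `{α ∈ r⁻¹(z) | γₙ α ∈ K}` has
`λᶻ`-measure at least `F (r γₙ) ≥ F y / 2`, and the choice of the `γₙ` makes these sets pairwise
disjoint. They all lie in `s⁻¹(s K)`, so `λᶻ(s⁻¹ N) = ∞` for the compact set `N = {z} ∪ s K`,
contradicting integrability.
-/

theorem Filter.exists_seq_forall_of_eventually {α : Type*} {l : Filter α} [l.NeBot]
    {P : α → Prop} {R : α → α → Prop} (hP : ∀ᶠ b in l, P b) (hR : ∀ a, P a → ∀ᶠ b in l, R a b) :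
    ∃ u : ℕ → α, (∀ n, P (u n)) ∧ ∀ m n, m < n → R (u m) (u n) :=
  exists_seq_of_forall_finset_exists P R fun s hs =>
    (hP.and (s.eventually_all.2 fun a ha => hR a (hs a ha))).exists

theorem MeasureTheory.measure_eq_top_of_pairwise_disjoint {Ω ι : Type*} [MeasurableSpace Ω]
    [Countable ι] [Infinite ι] {μ : Measure Ω} {E : ι → Set Ω} {S : Set Ω} {c : ℝ≥0∞}
    (hc : c ≠ 0) (hE : ∀ n, MeasurableSet (E n)) (hdisj : Pairwise (Function.onFun Disjoint E))
    (hES : ∀ n, E n ⊆ S) (hcE : ∀ n, c ≤ μ (E n)) : μ S = ⊤ :=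
  top_le_iff.mp <| calc
    ⊤ = ∑' _ : ι, c := (ENNReal.tsum_const_eq_top_of_ne_zero hc).symm
    _ ≤ ∑' n, μ (E n) := ENNReal.tsum_le_tsum hcE
    _ = μ (⋃ n, E n) := (measure_iUnion hdisj hE).symm
    _ ≤ μ S := measure_mono (Set.iUnion_subset hES)

namespace TopGroupoid

variable {G : Type*} [TopologicalSpace G] (Gd : TopGroupoid G)

theorem r_eq_self_of_mem_units {x : G} (hx : x ∈ Gd.units) : Gd.r x = x := by
  obtain ⟨γ, rfl⟩ := hx
  calc Gd.r (Gd.r γ) = Gd.r (Gd.mul γ (Gd.inv γ)) := by rw [Gd.mul_inv']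
    _ = Gd.r γ := Gd.r_mul _ _ (Gd.r_inv γ).symm

theorem s_mem_units (γ : G) : Gd.s γ ∈ Gd.units := ⟨Gd.inv γ, Gd.r_inv γ⟩

theorem orbit_subset_units (z : G) : Gd.orbit z ⊆ Gd.units := by
  rintro _ ⟨γ, -, rfl⟩
  exact ⟨γ, rfl⟩

theorem inv_mul_cancel_left' {γ α : G} (h : Gd.s γ = Gd.r α) :
    Gd.mul (Gd.inv γ) (Gd.mul γ α) = α := by
  rw [← Gd.mul_assoc' (Gd.inv γ) γ α (Gd.s_inv γ) h, Gd.inv_mul', h, Gd.unit_mul]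

theorem mul_inv_cancel_right' {δ β : G} (h : Gd.s δ = Gd.r β) :
    Gd.mul (Gd.mul δ β) (Gd.inv β) = δ := by
  rw [Gd.mul_assoc' δ β (Gd.inv β) h (Gd.r_inv β).symm, Gd.mul_inv', ← h, Gd.mul_unit]

theorem mul_inv_eq_mul_mul_inv {γ₁ γ₂ α : G} (h₁ : Gd.s γ₁ = Gd.r α) (h₂ : Gd.s γ₂ = Gd.r α) :
    Gd.mul γ₂ (Gd.inv γ₁) = Gd.mul (Gd.mul γ₂ α) (Gd.inv (Gd.mul γ₁ α)) := by
  have hcomp : Gd.s (Gd.mul γ₂ (Gd.inv γ₁)) = Gd.r (Gd.mul γ₁ α) := by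
    rw [Gd.s_mul _ _ (by rw [Gd.r_inv, h₁, h₂]), Gd.s_inv, Gd.r_mul _ _ h₁]
  have hmul : Gd.mul (Gd.mul γ₂ (Gd.inv γ₁)) (Gd.mul γ₁ α) = Gd.mul γ₂ α := by
    rw [Gd.mul_assoc' _ _ _ (by rw [Gd.r_inv, h₁, h₂]) (by rw [Gd.s_inv, Gd.r_mul _ _ h₁]),
      Gd.inv_mul_cancel_left' h₁]
  rw [← hmul, Gd.mul_inv_cancel_right' hcomp]

theorem continuousOn_mul_left (γ : G) :
    ContinuousOn (Gd.mul γ) {β | Gd.s γ = Gd.r β} :=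
  Gd.continuous_mul.comp (f := fun β => (γ, β)) (by fun_prop) fun _ hβ => hβ

theorem isCompact_setMul [T2Space G] {A B : Set G} (hA : IsCompact A) (hB : IsCompact B) :
    IsCompact (Gd.setMul A B) := by
  have hAB : Gd.setMul A B =
      (fun p : G × G => Gd.mul p.1 p.2) '' ((A ×ˢ B) ∩ {p | Gd.s p.1 = Gd.r p.2}) := by
    ext x
    constructor
    · rintro ⟨γ, hγ, α, hα, hc, rfl⟩; exact ⟨(γ, α), ⟨⟨hγ, hα⟩, hc⟩, rfl⟩
    · rintro ⟨⟨γ, α⟩, ⟨⟨hγ, hα⟩, hc⟩, rfl⟩; exact ⟨γ, hγ, α, hα, hc, rfl⟩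
  rw [hAB]
  refine IsCompact.image_of_continuousOn ?_ (Gd.continuous_mul.mono Set.inter_subset_right)
  exact (hA.prod hB).inter_right
    (isClosed_eq (Gd.continuous_s.comp continuous_fst) (Gd.continuous_r.comp continuous_snd))

def preimageMulLeft (γ : G) (K : Set G) : Set G := {α | Gd.r α = Gd.s γ ∧ Gd.mul γ α ∈ K}

theorem isClosed_preimageMulLeft [T2Space G] (γ : G) {K : Set G} (hK : IsClosed K) :
    IsClosed (Gd.preimageMulLeft γ K) := by
  have hr : IsClosed {α | Gd.s γ = Gd.r α} := isClosed_eq continuous_const Gd.continuous_r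
  have h := (Gd.continuousOn_mul_left γ).preimage_isClosed_of_isClosed hr hK
  convert h using 1
  ext α
  exact and_congr_left' eq_comm

theorem preimageMulLeft_subset_preimage_s (γ : G) (K : Set G) :
    Gd.preimageMulLeft γ K ⊆ Gd.s ⁻¹' (Gd.s '' K) := by
  rintro α ⟨hα, hK⟩
  exact ⟨_, hK, Gd.s_mul _ _ hα.symm⟩

theorem disjoint_preimageMulLeft {γ₁ γ₂ : G} {K : Set G}
    (h : Gd.mul γ₂ (Gd.inv γ₁) ∉ Gd.setMul K (Gd.inv '' K)) :
    Disjoint (Gd.preimageMulLeft γ₁ K) (Gd.preimageMulLeft γ₂ K) := by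
  refine Set.disjoint_left.mpr fun α ⟨hα₁, hK₁⟩ ⟨hα₂, hK₂⟩ => h ?_
  refine ⟨_, hK₂, _, ⟨_, hK₁, rfl⟩, ?_, Gd.mul_inv_eq_mul_mul_inv hα₁.symm hα₂.symm⟩
  rw [Gd.r_inv, Gd.s_mul _ _ hα₁.symm, Gd.s_mul _ _ hα₂.symm]

def arrowsNear (z y : G) : Filter G := comap Gd.r (𝓝 y) ⊓ 𝓟 (Gd.s ⁻¹' {z})

theorem arrowsNear_neBot {z y : G} (hy : y ∈ closure (Gd.orbit z)) :
    (Gd.arrowsNear z y).NeBot := by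
  refine inf_principal_neBot_iff.mpr fun U hU => ?_
  obtain ⟨V, hV, hVU⟩ := mem_comap.mp hU
  obtain ⟨_, hxV, γ, hγ, rfl⟩ := mem_closure_iff_nhds.mp hy V hV
  exact ⟨γ, hVU hxV, hγ⟩

theorem tendsto_r_arrowsNear (z y : G) : Tendsto Gd.r (Gd.arrowsNear z y) (𝓝 y) :=
  tendsto_comap.mono_left inf_le_left

theorem eventually_s_eq_arrowsNear (z y : G) : ∀ᶠ γ in Gd.arrowsNear z y, Gd.s γ = z :=
  mem_inf_of_right (mem_principal_self _)

theorem eventually_mul_inv_notMem [T2Space G] {C : Set G} (hC : IsCompact C) {z y γ' : G}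
    (hy : y ∉ Gd.orbit z) (hγ' : Gd.s γ' = z) :
    ∀ᶠ γ in Gd.arrowsNear z y, Gd.mul γ (Gd.inv γ') ∉ C := by
  set D := Gd.r '' (C ∩ Gd.s ⁻¹' {Gd.r γ'})
  have hD : IsCompact D :=
    (hC.inter_right (isClosed_singleton.preimage Gd.continuous_s)).image Gd.continuous_r
  have hyD : y ∉ D := by
    rintro ⟨δ, ⟨-, hδ⟩, rfl⟩
    have hδ : Gd.s δ = Gd.r γ' := hδ
    exact hy ⟨Gd.mul δ γ', by simp [Gd.s_mul _ _ hδ, hγ'], Gd.r_mul _ _ hδ⟩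
  filter_upwards [(Gd.tendsto_r_arrowsNear z y).eventually
    (hD.isClosed.isOpen_compl.mem_nhds hyD), Gd.eventually_s_eq_arrowsNear z y] with γ hγD hγ hγC
  have hcomp : Gd.s γ = Gd.r (Gd.inv γ') := by rw [Gd.r_inv, hγ, hγ']
  refine hγD ⟨_, ⟨hγC, ?_⟩, Gd.r_mul _ _ hcomp⟩
  simp [Gd.s_mul _ _ hcomp, Gd.s_inv]

end TopGroupoid

namespace HaarSystem

variable {G : Type*} [TopologicalSpace G] [MeasurableSpace G] {Gd : TopGroupoid G}
  (HS : HaarSystem Gd)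

theorem integral_pos [OpensMeasurableSpace G] {f : C(G, ℝ)} (hfc : HasCompactSupport f)
    (hf0 : ∀ x, 0 ≤ f x) {y : G} (hy : y ∈ Gd.units) (hfy : f y ≠ 0) :
    0 < ∫ α, f α ∂HS.lam y := by
  have := HS.regular y
  rw [integral_pos_iff_support_of_nonneg (f := f) hf0
    (f.continuous.integrable_of_hasCompactSupport hfc)]
  refine HS.supp_full y hy _ f.continuous.isOpen_support ⟨y, hfy, ?_⟩
  exact Gd.r_eq_self_of_mem_units hy

theorem ofReal_integral_le_lam_preimageMulLeft
    {f : C(G, ℝ)} (hfc : HasCompactSupport f) (hf1 : ∀ x, f x ≤ 1) (γ : G) :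
    ENNReal.ofReal (∫ α, f α ∂HS.lam (Gd.r γ)) ≤
      HS.lam (Gd.s γ) (Gd.preimageMulLeft γ (tsupport f)) := by
  set N := {α | Gd.r α ≠ Gd.s γ}
  have hN : HS.lam (Gd.s γ) N = 0 := HS.supp_subset _ (Gd.s_mem_units γ)
  rw [← HS.left_invariant γ f f.continuous hfc]
  calc ENNReal.ofReal (∫ α, f (Gd.mul γ α) ∂HS.lam (Gd.s γ))
      ≤ HS.lam (Gd.s γ) (Gd.preimageMulLeft γ (tsupport f) ∪ N) := by
        refine integral_le_measure (fun _ _ => hf1 _) fun α hα => ?_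
        obtain ⟨hαK, hαr⟩ := not_or.mp hα
        exact (image_eq_zero_of_notMem_tsupport fun hK => hαK ⟨not_not.mp hαr, hK⟩).le
    _ ≤ HS.lam (Gd.s γ) (Gd.preimageMulLeft γ (tsupport f)) + HS.lam (Gd.s γ) N :=
        measure_union_le _ _
    _ = HS.lam (Gd.s γ) (Gd.preimageMulLeft γ (tsupport f)) := by rw [hN, add_zero]

theorem exists_lam_preimage_s_eq_top [T2Space G] [LocallyCompactSpace G] [BorelSpace G]
    {z y : G} (hyc : y ∈ closure (Gd.orbit z)) (hyu : y ∈ Gd.units) (hy : y ∉ Gd.orbit z) :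
    ∃ M ⊆ Gd.units, IsCompact M ∧ HS.lam z (Gd.s ⁻¹' M) = ⊤ := by
  obtain ⟨f, hfy, -, hfc, hf01⟩ := exists_continuous_one_zero_of_isCompact isCompact_singleton
    isClosed_empty (Set.disjoint_empty {y})
  set K := tsupport f
  set F : G → ℝ := fun x => ∫ α, f α ∂HS.lam x
  have hFy : 0 < F y :=
    HS.integral_pos hfc (fun x => (hf01 x).1) hyu (by simp [hfy (Set.mem_singleton y)])
  have := Gd.arrowsNear_neBot hyc
  have hFnear : ∀ᶠ γ in Gd.arrowsNear z y, F y / 2 < F (Gd.r γ) :=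
    ((HS.continuous_int f f.continuous hfc).tendsto y).comp (Gd.tendsto_r_arrowsNear z y)
      |>.eventually (lt_mem_nhds (half_lt_self hFy))
  obtain ⟨u, hu, hsep⟩ := Filter.exists_seq_forall_of_eventually
    (R := fun γ' γ => Gd.mul γ (Gd.inv γ') ∉ Gd.setMul K (Gd.inv '' K))
    ((Gd.eventually_s_eq_arrowsNear z y).and hFnear)
    fun γ' hγ' => Gd.eventually_mul_inv_notMem
      (Gd.isCompact_setMul hfc (hfc.image Gd.continuous_inv)) hy hγ'.1
  refine ⟨Gd.s '' K, fun _ ⟨α, _, hα⟩ => hα ▸ Gd.s_mem_units α, hfc.image Gd.continuous_s, ?_⟩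
  refine measure_eq_top_of_pairwise_disjoint (E := fun n => Gd.preimageMulLeft (u n) K)
    (c := ENNReal.ofReal (F y / 2)) (by simpa using hFy)
    (fun n => (Gd.isClosed_preimageMulLeft _ (isClosed_tsupport f)).measurableSet) ?_
    (fun n => Gd.preimageMulLeft_subset_preimage_s _ K) fun n => ?_
  · intro m n hmn
    rcases hmn.lt_or_gt with h | h
    · exact Gd.disjoint_preimageMulLeft (hsep m n h)
    · exact (Gd.disjoint_preimageMulLeft (hsep n m h)).symm
  · rw [← (hu n).1]
    exact (ENNReal.ofReal_le_ofReal (hu n).2.le).trans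
      (HS.ofReal_integral_le_lam_preimageMulLeft hfc (fun x => (hf01 x).2) (u n))

variable {HS} in
theorem Integrable.lam_preimage_s_lt_top (hint : HS.Integrable) {z : G} (hz : z ∈ Gd.units)
    {M : Set G} (hMu : M ⊆ Gd.units) (hM : IsCompact M) : HS.lam z (Gd.s ⁻¹' M) < ⊤ :=
  calc HS.lam z (Gd.s ⁻¹' M) ≤ HS.lam z (Gd.s ⁻¹' insert z M) :=
        measure_mono (Set.preimage_mono (Set.subset_insert z M))
    _ ≤ ⨆ x ∈ insert z M, HS.lam x (Gd.s ⁻¹' insert z M) :=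
        le_biSup (fun x => HS.lam x (Gd.s ⁻¹' insert z M)) (Set.mem_insert z M)
    _ < ⊤ := hint _ (Set.insert_subset hz hMu) (hM.insert z)

end HaarSystem

theorem stmt19_general {G : Type*} [TopologicalSpace G] [T2Space G] [LocallyCompactSpace G]
    [MeasurableSpace G] [BorelSpace G]
    (Gd : TopGroupoid G) (HS : HaarSystem Gd)
    (hint : HS.Integrable) :
    ∀ z ∈ Gd.units, closure (Gd.orbit z) ∩ Gd.units = Gd.orbit z := by
  intro z hz
  refine Set.Subset.antisymm (fun y ⟨hyc, hyu⟩ => ?_)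
    (Set.subset_inter subset_closure (Gd.orbit_subset_units z))
  by_contra hy
  obtain ⟨M, hMu, hM, htop⟩ := HS.exists_lam_preimage_s_eq_top hyc hyu hy
  exact (hint.lam_preimage_s_lt_top hz hMu hM).ne htop

/-- if `G` is integrable then all orbits are closed in `G⁰`. -/
theorem stmt19 {G : Type*} [TopologicalSpace G] [T2Space G] [LocallyCompactSpace G]
    [SecondCountableTopology G] [MeasurableSpace G] [BorelSpace G]
    (Gd : TopGroupoid G) (HS : HaarSystem Gd) (hpr : Gd.Principal)
    (hint : HS.Integrable) :
    ∀ z ∈ Gd.units, closure (Gd.orbit z) ∩ Gd.units = Gd.orbit z :=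
  stmt19_general Gd HS hint
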